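/- Under assumptions (U1)–(U2) of conditional uniformity, one has E[|n|·1_X] = (1/3)·E[((|I|²-1)/|I|)·1_X] where |I| = n⁺ - n⁻ + 1, and this equals (1/3)·E[(|I|+1)·1_X·1_{n≠0}]. -/

import Mathlib

/-!
Conditioning on `(n⁺, n⁻)` replaces a function of `n` by its average over `[n⁻, n⁺]` (U1), and
conditioning further on `|I|` replaces a function of `n⁺` by its average over `[0, |I| - 1]` (U2).
Writing `n = u - v` with `u = n⁺`, `E[|n| 1_X]` becomes the expectation of the mean of `|u - v|`
over `u, v ∈ {0, …, |I| - 1}`, which is `(|I|² - 1) / (3 |I|)`; likewise the mean of `1_{n ≠ 0}`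
over `[n⁻, n⁺]` is `(|I| - 1) / |I|`. Working with lower integrals of nonnegative functions, each
averaging step is a rearrangement of a nonnegative series over the countably many atoms.
-/

open Finset MeasureTheory
open scoped BigOperators ENNReal

lemma cast_card_Icc_of_le {a b : ℤ} (h : a ≤ b + 1) : (#(Icc a b) : ℝ) = b - a + 1 := by
  rw [← Int.cast_natCast, Int.card_Icc_of_le a b h]
  push_cast
  ring

lemma sum_Icc_zero_intCast {k : ℤ} (hk : 0 ≤ k) : ∑ v ∈ Icc 0 k, (v : ℝ) = k * (k + 1) / 2 := by
  induction k, hk using Int.leInduction with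
  | base => simp
  | succ k hk ih =>
    rw [← insert_Icc_right_eq_Icc_add_one (by omega), sum_insert (by simp), ih]
    push_cast
    ring

lemma sum_Icc_zero_abs_sub_succ {k : ℤ} (hk : 0 ≤ k) :
    ∑ v ∈ Icc 0 k, |(v : ℝ) - (k + 1 : ℤ)| = (k + 1) * (k + 2) / 2 := by
  have hv : ∀ v ∈ Icc 0 k, |(v : ℝ) - (k + 1 : ℤ)| = k + 1 - v := fun v hv => by
    have hvk : (v : ℝ) ≤ k := by exact_mod_cast (mem_Icc.mp hv).2
    rw [abs_sub_comm, abs_of_nonneg (by push_cast; linarith)]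
    push_cast
    ring
  rw [sum_congr rfl hv, sum_sub_distrib, sum_const, sum_Icc_zero_intCast hk, nsmul_eq_mul,
    cast_card_Icc_of_le (by omega)]
  ring

lemma sum_Icc_zero_sum_Icc_zero_abs_sub {k : ℤ} (hk : 0 ≤ k) :
    ∑ u ∈ Icc 0 k, ∑ v ∈ Icc 0 k, |(u : ℝ) - v| = k * (k + 1) * (k + 2) / 3 := by
  induction k, hk using Int.leInduction with
  | base => simp
  | succ k hk ih =>
    simp_rw [← insert_Icc_right_eq_Icc_add_one (show 0 ≤ k + 1 by omega)]
    rw [sum_insert (by simp), sum_insert (by simp)]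
    simp_rw [sum_insert (show k + 1 ∉ Icc 0 k by simp)]
    rw [sum_add_distrib, ih]
    simp_rw [abs_sub_comm ((k + 1 : ℤ) : ℝ)]
    rw [sum_Icc_zero_abs_sub_succ hk, sub_self, abs_zero]
    push_cast
    ring

lemma expect_Icc_zero_expect_Icc_zero_abs_sub {k : ℤ} (hk : 0 ≤ k) :
    𝔼 u ∈ Icc 0 k, 𝔼 v ∈ Icc 0 k, |(u : ℝ) - v| = (((k : ℝ) + 1) ^ 2 - 1) / (k + 1) / 3 := by
  have hk1 : (k : ℝ) + 1 ≠ 0 := by positivity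
  simp_rw [expect_eq_sum_div_card, ← sum_div, sum_Icc_zero_sum_Icc_zero_abs_sub hk,
    cast_card_Icc_of_le (by omega : (0 : ℤ) ≤ k + 1)]
  rw [Int.cast_zero, sub_zero, show ((k : ℝ) + 1) ^ 2 - 1 = k * (k + 2) by ring]
  field_simp

lemma expect_Icc_sub_eq_expect_Icc_zero (b k : ℤ) (g : ℤ → ℝ) :
    𝔼 j ∈ Icc (b - k) b, g j = 𝔼 v ∈ Icc 0 k, g (b - v) :=
  expect_nbij' (b - ·) (b - ·) (fun j hj => by simp only [mem_Icc] at hj ⊢; omega)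
    (fun v hv => by simp only [mem_Icc] at hv ⊢; omega) (fun j _ => by simp) (fun v _ => by simp)
    (fun j _ => by simp)

lemma expect_Icc_zero_expect_Icc_sub_abs {k : ℤ} (hk : 0 ≤ k) :
    𝔼 b ∈ Icc 0 k, 𝔼 j ∈ Icc (b - k) b, |(j : ℝ)| = (((k : ℝ) + 1) ^ 2 - 1) / (k + 1) / 3 := by
  simp_rw [expect_Icc_sub_eq_expect_Icc_zero, Int.cast_sub]
  exact expect_Icc_zero_expect_Icc_zero_abs_sub hk

lemma expect_Icc_ite_ne_zero {a b : ℤ} (ha : a ≤ 0) (hb : 0 ≤ b) :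
    𝔼 j ∈ Icc a b, (if j ≠ 0 then (1 : ℝ) else 0) = (b - a) / (b - a + 1) := by
  have h0 : (0 : ℤ) ∈ Icc a b := mem_Icc.mpr ⟨ha, hb⟩
  rw [expect_eq_sum_div_card, sum_boole, filter_ne', card_erase_of_mem h0,
    Nat.cast_sub (card_pos.mpr ⟨0, h0⟩), cast_card_Icc_of_le (by omega)]
  simp

lemma ENNReal.ofReal_expect {ι : Type*} {s : Finset ι} {f : ι → ℝ} (hf : ∀ i ∈ s, 0 ≤ f i) :
    ENNReal.ofReal (𝔼 i ∈ s, f i) = (∑ i ∈ s, ENNReal.ofReal (f i)) / #s := by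
  rcases s.eq_empty_or_nonempty with rfl | hs
  · simp
  rw [expect_eq_sum_div_card, ENNReal.ofReal_div_of_pos (by simpa using hs.card_pos),
    ENNReal.ofReal_sum_of_nonneg hf, ENNReal.ofReal_natCast]

namespace MeasureTheory

variable {Ω α β : Type*} [MeasurableSpace Ω] {μ : Measure Ω}

lemma lintegral_comp_eq_tsum [MeasurableSpace α] [Countable α] [MeasurableSingletonClass α]
    {F : Ω → α} (hF : Measurable F) (f : α → ℝ≥0∞) :
    ∫⁻ ω, f (F ω) ∂μ = ∑' a, f a * μ (F ⁻¹' {a}) := by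
  rw [← lintegral_map (measurable_of_countable f) hF, lintegral_countable']
  simp_rw [Measure.map_apply hF (measurableSet_singleton _)]

lemma integral_eq_integral_of_lintegral_ofReal_eq {f g : Ω → ℝ} (hf : 0 ≤ f) (hg : 0 ≤ g)
    (hfm : AEStronglyMeasurable f μ) (hgm : AEStronglyMeasurable g μ)
    (h : ∫⁻ ω, ENNReal.ofReal (f ω) ∂μ = ∫⁻ ω, ENNReal.ofReal (g ω) ∂μ) :
    ∫ ω, f ω ∂μ = ∫ ω, g ω ∂μ := by
  rw [integral_eq_lintegral_of_nonneg_ae (.of_forall hf) hfm,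
    integral_eq_lintegral_of_nonneg_ae (.of_forall hg) hgm, h]

/-- Conditionally on `G = g`, `H` is uniform on `S g`; this is the form taken by (U1) and (U2). -/
structure IsCondUniform (μ : Measure Ω) (G : Ω → α) (H : Ω → β) (S : α → Finset β) : Prop where
  nonempty : ∀ g, μ (G ⁻¹' {g}) ≠ 0 → (S g).Nonempty
  measureReal_inter : ∀ g, ∀ h ∈ S g,
    μ.real (G ⁻¹' {g} ∩ H ⁻¹' {h}) = μ.real (G ⁻¹' {g}) / #(S g)

namespace IsCondUniform

variable [IsFiniteMeasure μ] {G : Ω → α} {H : Ω → β} {S : α → Finset β}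

lemma measure_inter (hU : IsCondUniform μ G H S) {g : α} {h : β} (hh : h ∈ S g) :
    μ (G ⁻¹' {g} ∩ H ⁻¹' {h}) = μ (G ⁻¹' {g}) / #(S g) := by
  have hcard : (0 : ℝ) < #(S g) := by exact_mod_cast card_pos.mpr ⟨h, hh⟩
  rw [← ofReal_measureReal, hU.measureReal_inter g h hh, ENNReal.ofReal_div_of_pos hcard,
    ofReal_measureReal, ENNReal.ofReal_natCast]

variable [MeasurableSpace β] [MeasurableSingletonClass β]

/-- The uniform masses on `S g` already exhaust `μ (G ⁻¹' {g})`, so nothing is left outside. -/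
lemma measure_inter_eq_zero (hU : IsCondUniform μ G H S) (hH : Measurable H) {g : α} {h : β}
    (hh : h ∉ S g) : μ (G ⁻¹' {g} ∩ H ⁻¹' {h}) = 0 := by
  classical
  by_cases h0 : μ (G ⁻¹' {g}) = 0
  · exact measure_mono_null Set.inter_subset_left h0
  have hS := hU.nonempty g h0
  have hsum : ∑ h' ∈ S g, μ (G ⁻¹' {g} ∩ H ⁻¹' {h'}) = μ (G ⁻¹' {g}) := by
    rw [sum_congr rfl fun h' hh' => hU.measure_inter hh', sum_const, nsmul_eq_mul,
      ENNReal.mul_div_cancel (by simpa using hS.card_pos.ne') (ENNReal.natCast_ne_top _)]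
  have hle : ∑ h' ∈ insert h (S g), μ (G ⁻¹' {g} ∩ H ⁻¹' {h'}) ≤ μ (G ⁻¹' {g}) := by
    simp_rw [Set.inter_comm (G ⁻¹' {g}),
      ← Measure.restrict_apply (hH (measurableSet_singleton _))]
    rw [sum_measure_preimage_singleton _ fun h' _ => hH (measurableSet_singleton h')]
    exact (measure_mono (Set.subset_univ _)).trans_eq (Measure.restrict_apply_univ _)
  rw [sum_insert hh, hsum] at hle
  exact nonpos_iff_eq_zero.mp
    (ENNReal.le_of_add_le_add_right (measure_ne_top μ _) (hle.trans_eq (zero_add _).symm))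

lemma tsum_ofReal_mul_measure_inter (hU : IsCondUniform μ G H S) (hH : Measurable H) {g : α}
    {f : β → ℝ} (hf : ∀ h ∈ S g, 0 ≤ f h) :
    ∑' h, ENNReal.ofReal (f h) * μ (G ⁻¹' {g} ∩ H ⁻¹' {h}) =
      ENNReal.ofReal (𝔼 h ∈ S g, f h) * μ (G ⁻¹' {g}) := by
  rw [tsum_eq_sum (s := S g) fun h hh => by rw [hU.measure_inter_eq_zero hH hh, mul_zero],
    sum_congr rfl fun h hh => congrArg _ (hU.measure_inter hh), ENNReal.ofReal_expect hf,
    ← sum_mul]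
  simp only [div_eq_mul_inv]
  ring

theorem lintegral_ofReal_comp [MeasurableSpace α] [Countable α] [MeasurableSingletonClass α]
    [Countable β] (hU : IsCondUniform μ G H S) (hG : Measurable G) (hH : Measurable H)
    (f : α → β → ℝ) (hf : ∀ g, ∀ h ∈ S g, 0 ≤ f g h) :
    ∫⁻ ω, ENNReal.ofReal (f (G ω) (H ω)) ∂μ =
      ∫⁻ ω, ENNReal.ofReal (𝔼 h ∈ S (G ω), f (G ω) h) ∂μ := by
  rw [lintegral_comp_eq_tsum (F := fun ω => (G ω, H ω)) (hG.prodMk hH)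
      (fun p => ENNReal.ofReal (f p.1 p.2)),
    lintegral_comp_eq_tsum hG (fun g => ENNReal.ofReal (𝔼 h ∈ S g, f g h)), ENNReal.tsum_prod']
  refine tsum_congr fun g => ?_
  simp_rw [← Set.singleton_prod_singleton, Set.mk_preimage_prod]
  exact hU.tsum_ofReal_mul_measure_inter hH (hf g)

end IsCondUniform

end MeasureTheory

lemma one_le_length {Ω : Type*} {np nm : Ω → ℤ} (horder : ∀ ω, nm ω ≤ 0 ∧ 0 ≤ np ω) (ω : Ω) :
    (1 : ℝ) ≤ (np ω : ℝ) - nm ω + 1 := by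
  have : (nm ω : ℝ) ≤ np ω := by exact_mod_cast (horder ω).1.trans (horder ω).2
  linarith

section

variable {Ω : Type*} [MeasurableSpace Ω] {μ : Measure Ω} {X : Set Ω} {np nm nn : Ω → ℤ}

lemma isCondUniform_Icc_endpoints (hX : MeasurableSet X) (horder : ∀ ω, nm ω ≤ 0 ∧ 0 ≤ np ω)
    (hU1 : ∀ a b : ℤ, a ≤ 0 → 0 ≤ b → ∀ j ∈ Set.Icc a b,
      (μ (X ∩ {ω | np ω = b} ∩ {ω | nm ω = a} ∩ {ω | nn ω = j})).toReal
        = (μ (X ∩ {ω | np ω = b} ∩ {ω | nm ω = a})).toReal / ((b : ℝ) - (a : ℝ) + 1)) :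
    IsCondUniform (μ.restrict X) (fun ω => (np ω, nm ω)) nn (fun g => Icc g.2 g.1) := by
  refine ⟨fun ⟨b, a⟩ h0 => ?_, fun ⟨b, a⟩ j hj => ?_⟩
  · obtain ⟨ω, hω⟩ := nonempty_of_measure_ne_zero h0
    simp only [Set.mem_preimage, Set.mem_singleton_iff, Prod.ext_iff] at hω
    obtain ⟨rfl, rfl⟩ := hω
    exact nonempty_Icc.mpr ((horder ω).1.trans (horder ω).2)
  have hj' := mem_Icc.mp hj
  by_cases hab : a ≤ 0 ∧ 0 ≤ b
  · rw [measureReal_def, measureReal_def, Measure.restrict_apply' hX, Measure.restrict_apply' hX,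
      cast_card_Icc_of_le (by omega)]
    convert hU1 a b hab.1 hab.2 j hj' using 3
    · ext ω
      simp only [Set.mem_inter_iff, Set.mem_preimage, Set.mem_singleton_iff, Prod.ext_iff,
        Set.mem_ofPred_eq]
      tauto
    · congr 1
      ext ω
      simp only [Set.mem_inter_iff, Set.mem_preimage, Set.mem_singleton_iff, Prod.ext_iff,
        Set.mem_ofPred_eq]
      tauto
  · have hempty : (fun ω => (np ω, nm ω)) ⁻¹' {(b, a)} = ∅ := by
      ext ω
      simp only [Set.mem_preimage, Set.mem_singleton_iff, Prod.ext_iff, Set.mem_empty_iff_false,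
        iff_false, not_and]
      rintro rfl rfl
      exact hab (horder ω)
    simp [hempty]

lemma isCondUniform_Icc_zero_length (hX : MeasurableSet X) (horder : ∀ ω, nm ω ≤ 0 ∧ 0 ≤ np ω)
    (hU2 : ∀ k : ℤ, 0 ≤ k → ∀ j ∈ Set.Icc (0 : ℤ) k,
      (μ (X ∩ {ω | np ω - nm ω = k} ∩ {ω | np ω = j})).toReal
        = (μ (X ∩ {ω | np ω - nm ω = k})).toReal / ((k : ℝ) + 1)) :
    IsCondUniform (μ.restrict X) (fun ω => np ω - nm ω) np (fun k => Icc 0 k) := by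
  refine ⟨fun k h0 => ?_, fun k j hj => ?_⟩
  · obtain ⟨ω, rfl⟩ := nonempty_of_measure_ne_zero h0
    exact nonempty_Icc.mpr (by linarith [horder ω])
  have hj' := mem_Icc.mp hj
  rw [measureReal_def, measureReal_def, Measure.restrict_apply' hX, Measure.restrict_apply' hX,
    cast_card_Icc_of_le (by omega), Int.cast_zero, sub_zero]
  convert hU2 k (by omega) j hj' using 3
  · ext ω
    simp only [Set.mem_inter_iff, Set.mem_preimage, Set.mem_singleton_iff, Set.mem_ofPred_eq]
    tauto
  · congr 1
    ext ω
    simp only [Set.mem_inter_iff, Set.mem_preimage, Set.mem_singleton_iff, Set.mem_ofPred_eq]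
    tauto

variable [IsFiniteMeasure μ]

lemma lintegral_ofReal_abs_eq (hnp : Measurable np) (hnm : Measurable nm) (hnn : Measurable nn)
    (horder : ∀ ω, nm ω ≤ 0 ∧ 0 ≤ np ω)
    (hUn : IsCondUniform (μ.restrict X) (fun ω => (np ω, nm ω)) nn (fun g => Icc g.2 g.1))
    (hUp : IsCondUniform (μ.restrict X) (fun ω => np ω - nm ω) np (fun k => Icc 0 k)) :
    ∫⁻ ω in X, ENNReal.ofReal |(nn ω : ℝ)| ∂μ = ∫⁻ ω in X, ENNReal.ofReal
      ((((np ω : ℝ) - nm ω + 1) ^ 2 - 1) / ((np ω : ℝ) - nm ω + 1) / 3) ∂μ := by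
  have hp := hUp.lintegral_ofReal_comp (hnp.sub hnm) hnp
    (fun k b => 𝔼 j ∈ Icc (b - k) b, |(j : ℝ)|) fun _ _ _ => expect_nonneg fun _ _ => abs_nonneg _
  simp only [sub_sub_cancel] at hp
  rw [hUn.lintegral_ofReal_comp (hnp.prodMk hnm) hnn (fun _ j => |(j : ℝ)|)
    fun _ _ _ => abs_nonneg _, hp]
  refine lintegral_congr fun ω => ?_
  rw [expect_Icc_zero_expect_Icc_sub_abs (by linarith [horder ω]), Int.cast_sub]

lemma lintegral_ofReal_mul_ite_ne_zero_eq (hnp : Measurable np) (hnm : Measurable nm)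
    (hnn : Measurable nn) (horder : ∀ ω, nm ω ≤ 0 ∧ 0 ≤ np ω)
    (hUn : IsCondUniform (μ.restrict X) (fun ω => (np ω, nm ω)) nn (fun g => Icc g.2 g.1)) :
    ∫⁻ ω in X, ENNReal.ofReal
      ((((np ω : ℝ) - nm ω + 1) + 1) * (if nn ω ≠ 0 then 1 else 0)) ∂μ = ∫⁻ ω in X,
      ENNReal.ofReal ((((np ω : ℝ) - nm ω + 1) ^ 2 - 1) / ((np ω : ℝ) - nm ω + 1)) ∂μ := by
  have hf : ∀ g : ℤ × ℤ, ∀ j ∈ Icc g.2 g.1,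
      0 ≤ ((g.1 : ℝ) - g.2 + 1 + 1) * (if j ≠ 0 then 1 else 0) := fun g j hj => by
    have : (g.2 : ℝ) ≤ g.1 := by exact_mod_cast (mem_Icc.mp hj).1.trans (mem_Icc.mp hj).2
    exact mul_nonneg (by linarith) (by split_ifs <;> norm_num)
  rw [hUn.lintegral_ofReal_comp (hnp.prodMk hnm) hnn _ hf]
  refine lintegral_congr fun ω => ?_
  have hlen := one_le_length horder ω
  rw [← mul_expect, expect_Icc_ite_ne_zero (horder ω).1 (horder ω).2]
  congr 1
  field_simp
  ring

end

theorem expectation_abs_n_identity {Ω : Type*} [MeasurableSpace Ω]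
    (μ : Measure Ω) [IsProbabilityMeasure μ]
    (X : Set Ω) (hX : MeasurableSet X)
    (np nm nn : Ω → ℤ) (hnp : Measurable np) (hnm : Measurable nm) (hnn : Measurable nn)
    (horder : ∀ ω, nm ω ≤ 0 ∧ 0 ≤ np ω)
    (hU1 : ∀ a b : ℤ, a ≤ 0 → 0 ≤ b → ∀ j ∈ Set.Icc a b,
      (μ (X ∩ {ω | np ω = b} ∩ {ω | nm ω = a} ∩ {ω | nn ω = j})).toReal
        = (μ (X ∩ {ω | np ω = b} ∩ {ω | nm ω = a})).toReal / ((b : ℝ) - (a : ℝ) + 1))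
    (hU2 : ∀ k : ℤ, 0 ≤ k → ∀ j ∈ Set.Icc (0 : ℤ) k,
      (μ (X ∩ {ω | np ω - nm ω = k} ∩ {ω | np ω = j})).toReal
        = (μ (X ∩ {ω | np ω - nm ω = k})).toReal / ((k : ℝ) + 1)) :
    (∫ ω in X, |(nn ω : ℝ)| ∂μ
      = (1 / 3) * ∫ ω in X,
          ((((np ω : ℝ) - (nm ω : ℝ) + 1)) ^ 2 - 1) / ((np ω : ℝ) - (nm ω : ℝ) + 1) ∂μ) ∧
    (∫ ω in X, |(nn ω : ℝ)| ∂μ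
      = (1 / 3) * ∫ ω in X,
          (((np ω : ℝ) - (nm ω : ℝ) + 1) + 1) * (if nn ω ≠ 0 then 1 else 0) ∂μ) := by
  have hUn := isCondUniform_Icc_endpoints hX horder hU1
  have hUp := isCondUniform_Icc_zero_length hX horder hU2
  have hmeas (F : ℤ × ℤ × ℤ → ℝ) :
      AEStronglyMeasurable (fun ω => F (np ω, nm ω, nn ω)) (μ.restrict X) :=
    ((measurable_of_countable F).comp (hnp.prodMk (hnm.prodMk hnn))).aestronglyMeasurable
  have hquot (ω : Ω) : 0 ≤ (((np ω : ℝ) - nm ω + 1) ^ 2 - 1) / ((np ω : ℝ) - nm ω + 1) := by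
    have := one_le_length horder ω
    exact div_nonneg (by nlinarith) (by linarith)
  have habs : ∫ ω in X, |(nn ω : ℝ)| ∂μ = (1 / 3) * ∫ ω in X,
      (((np ω : ℝ) - nm ω + 1) ^ 2 - 1) / ((np ω : ℝ) - nm ω + 1) ∂μ := by
    rw [integral_eq_integral_of_lintegral_ofReal_eq (fun ω => abs_nonneg _)
      (fun ω => div_nonneg (hquot ω) zero_le_three) (hmeas fun p => |(p.2.2 : ℝ)|)
      (hmeas fun p => (((p.1 : ℝ) - p.2.1 + 1) ^ 2 - 1) / ((p.1 : ℝ) - p.2.1 + 1) / 3)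
      (lintegral_ofReal_abs_eq hnp hnm hnn horder hUn hUp), integral_div]
    ring
  refine ⟨habs, habs.trans (congrArg _ ?_)⟩
  exact integral_eq_integral_of_lintegral_ofReal_eq hquot
    (fun ω => mul_nonneg (by linarith [one_le_length horder ω]) (by split_ifs <;> norm_num))
    (hmeas fun p => (((p.1 : ℝ) - p.2.1 + 1) ^ 2 - 1) / ((p.1 : ℝ) - p.2.1 + 1))
    (hmeas fun p => ((p.1 : ℝ) - p.2.1 + 1 + 1) * if p.2.2 ≠ 0 then 1 else 0)
    (lintegral_ofReal_mul_ite_ne_zero_eq hnp hnm hnn horder hUn).symm
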